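/- Let ψ : ℕ → ℝ be a nonnegative sequence with Σ_{k=1}^∞ k·ψ(k) < ∞, let β ∈ ℝ and n ∈ ℕ (n ≥ 1). Then Σ_{k=n}^∞ ψ(k) − (π/n)·Σ_{k=1}^∞ k·ψ(k+n) ≤ sup_{t∈ℝ} |Ψ_{β,n}(t)| ≤ Σ_{k=n}^∞ ψ(k). -/

import Mathlib

/-!
The upper bound is the triangle inequality. For the lower bound, choose `t₀` with `n t₀ ≡ βπ/2`
modulo `2π` and `|t₀| ≤ π / n`: then `Ψ_{β,n}(t₀) = Σ_k ψ(k+n) cos(k t₀)`, and the termwise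
estimate `cos x ≥ 1 - |x|` gives `Ψ_{β,n}(t₀) ≥ Σ_k ψ(k+n) - (π / n) Σ_k k ψ(k+n)`.
-/

open MeasureTheory Real Filter

noncomputable section

/-- The kernel `Ψ_{β,n}(t) = Σ_{k=n}^∞ ψ(k) cos(k t - βπ/2)`. -/
def PsiKerN (ψ : ℕ → ℝ) (β : ℝ) (n : ℕ) (t : ℝ) : ℝ :=
  ∑' k : ℕ, ψ (k + n) * Real.cos (((k + n : ℕ) : ℝ) * t - β * π / 2)

section CosineSeries

variable {a : ℕ → ℝ}

lemma Summable.of_summable_natCast_mul (ha : ∀ k, 0 ≤ a k)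
    (hka : Summable fun k : ℕ => (k : ℝ) * a k) : Summable a := by
  rw [← summable_nat_add_iff 1]
  refine .of_nonneg_of_le (fun k => ha _) (fun k => ?_) ((summable_nat_add_iff 1).2 hka)
  exact le_mul_of_one_le_left (ha _) (by simp)

lemma Summable.natCast_mul_comp_add (ha : ∀ k, 0 ≤ a k)
    (hka : Summable fun k : ℕ => (k : ℝ) * a k) (n : ℕ) :
    Summable fun k : ℕ => (k : ℝ) * a (k + n) := by
  refine .of_nonneg_of_le (fun k => mul_nonneg k.cast_nonneg (ha _)) (fun k => ?_)
    ((summable_nat_add_iff n).2 hka)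
  gcongr
  · exact ha _
  · exact_mod_cast k.le_add_right n

lemma norm_mul_cos_le {c : ℝ} (hc : 0 ≤ c) (x : ℝ) : ‖c * cos x‖ ≤ c := by
  rw [norm_mul, Real.norm_of_nonneg hc]
  exact mul_le_of_le_one_right hc (abs_cos_le_one x)

lemma Summable.mul_cos (ha : ∀ k, 0 ≤ a k) (hs : Summable a) (φ : ℕ → ℝ) :
    Summable fun k => a k * cos (φ k) :=
  hs.of_norm_bounded fun k => norm_mul_cos_le (ha k) _

lemma abs_tsum_mul_cos_le (ha : ∀ k, 0 ≤ a k) (hs : Summable a) (φ : ℕ → ℝ) :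
    |∑' k, a k * cos (φ k)| ≤ ∑' k, a k :=
  tsum_of_norm_bounded hs.hasSum fun k => norm_mul_cos_le (ha k) _

lemma sub_mul_abs_le_mul_cos {c : ℝ} (hc : 0 ≤ c) (x : ℝ) : c - c * |x| ≤ c * cos x := by
  have h : 1 - cos x ≤ |x| := by
    simpa using (le_abs_self _).trans (abs_cos_sub_cos_le 0 x)
  nlinarith

lemma tsum_sub_abs_mul_tsum_le_tsum_mul_cos (ha : ∀ k, 0 ≤ a k) (hs : Summable a)
    (hka : Summable fun k : ℕ => (k : ℝ) * a k) (t : ℝ) :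
    ∑' k, a k - |t| * ∑' k : ℕ, (k : ℝ) * a k ≤ ∑' k : ℕ, a k * cos (k * t) := by
  rw [← tsum_mul_left, ← hs.tsum_sub (hka.mul_left _)]
  refine (hs.sub (hka.mul_left _)).tsum_le_tsum (fun k => ?_) (hs.mul_cos ha _)
  calc a k - |t| * (k * a k) = a k - a k * |k * t| := by
        rw [abs_mul, Nat.abs_cast]; ring
    _ ≤ a k * cos (k * t) := sub_mul_abs_le_mul_cos (ha k) _

end CosineSeries

lemma exists_int_abs_sub_mul_two_pi_le (θ : ℝ) : ∃ m : ℤ, |θ - m * (2 * π)| ≤ π := by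
  refine ⟨round (θ / (2 * π)), ?_⟩
  have h2π : 0 < 2 * π := by positivity
  calc |θ - round (θ / (2 * π)) * (2 * π)| = |θ / (2 * π) - round (θ / (2 * π))| * (2 * π) := by
        rw [← abs_of_pos h2π, ← abs_mul, abs_of_pos h2π, sub_mul, div_mul_cancel₀ _ h2π.ne']
    _ ≤ 1 / 2 * (2 * π) := by gcongr; exact abs_sub_round _
    _ = π := by ring

lemma exists_abs_le_pi_div_cos_natCast_add_mul_sub_eq (θ : ℝ) {n : ℕ} (hn : 0 < n) :
    ∃ t : ℝ, |t| ≤ π / n ∧ ∀ k : ℕ, cos (((k + n : ℕ) : ℝ) * t - θ) = cos (k * t) := by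
  obtain ⟨m, hm⟩ := exists_int_abs_sub_mul_two_pi_le θ
  have hn' : (0 : ℝ) < n := by exact_mod_cast hn
  refine ⟨(θ - m * (2 * π)) / n, ?_, fun k => ?_⟩
  · rw [abs_div, abs_of_pos hn']
    gcongr
  · rw [← cos_sub_int_mul_two_pi (k * _) m]
    congr 1
    field_simp
    push_cast
    ring

/-- Two-sided bound for the uniform norm of `Ψ_{β,n}`. -/
theorem PsiKerN_norm_bounds (ψ : ℕ → ℝ) (hψ : ∀ k, 0 ≤ ψ k)
    (hsum : Summable (fun k : ℕ => (k : ℝ) * ψ k)) (β : ℝ) (n : ℕ) (hn : 1 ≤ n) :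
    (∑' k : ℕ, ψ (k + n)) - (π / (n : ℝ)) * (∑' k : ℕ, ((k : ℝ) + 1) * ψ (k + 1 + n)) ≤
        (⨆ t : ℝ, |PsiKerN ψ β n t|) ∧
      (⨆ t : ℝ, |PsiKerN ψ β n t|) ≤ ∑' k : ℕ, ψ (k + n) := by
  have ha : ∀ k, 0 ≤ ψ (k + n) := fun k => hψ _
  have hs : Summable fun k => ψ (k + n) :=
    (summable_nat_add_iff n).2 (.of_summable_natCast_mul hψ hsum)
  have hka := hsum.natCast_mul_comp_add hψ n
  have hub : ∀ t, |PsiKerN ψ β n t| ≤ ∑' k, ψ (k + n) := fun t =>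
    abs_tsum_mul_cos_le ha hs _
  refine ⟨?_, ciSup_le hub⟩
  obtain ⟨t₀, ht₀, hcos⟩ := exists_abs_le_pi_div_cos_natCast_add_mul_sub_eq (β * π / 2) hn
  have hshift : ∑' k : ℕ, (k : ℝ) * ψ (k + n) = ∑' k : ℕ, ((k : ℝ) + 1) * ψ (k + 1 + n) := by
    rw [hka.tsum_eq_zero_add]
    simp
  calc (∑' k, ψ (k + n)) - π / n * ∑' k : ℕ, ((k : ℝ) + 1) * ψ (k + 1 + n)
      ≤ ∑' k, ψ (k + n) - |t₀| * ∑' k : ℕ, (k : ℝ) * ψ (k + n) := by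
        rw [← hshift]
        gcongr
        exact tsum_nonneg fun k => mul_nonneg k.cast_nonneg (ha k)
    _ ≤ ∑' k : ℕ, ψ (k + n) * cos (k * t₀) := tsum_sub_abs_mul_tsum_le_tsum_mul_cos ha hs hka t₀
    _ = PsiKerN ψ β n t₀ := tsum_congr fun k => by rw [hcos]
    _ ≤ ⨆ t, |PsiKerN ψ β n t| :=
        (le_abs_self _).trans (le_ciSup ⟨_, Set.forall_mem_range.2 hub⟩ t₀)
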